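/- arXiv:2208.02526 — 3 statements merged into one kernel-verified Lean document; each statement's English description precedes it below -/
import Mathlib

section
/- Let G = (L ∪ R, E) be a bipartite graph with |L| = |R| = n, and let F be a nonnegative integer. If the polytope P_F^G = { x ∈ [0,1]^{L∪R} : Σ_v x_v ≤ F + 1/3, and x_u + x_v ≥ 1 for every edge (u,v) ∈ E } is nonempty, then its (2n-dimensional Lebesgue) volume is at least (1/(20n))^{2n}. -/
open Finset MeasureTheory

lemma countA (m : ℕ) (c : ℝ) (hc : 0 ≤ c) :
    (((Finset.Icc 1 m).filter (fun k : ℕ => (k:ℝ) ≤ c)).card : ℝ) ≤ c := by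
  have hsub : (Finset.Icc 1 m).filter (fun k : ℕ => (k:ℝ) ≤ c) ⊆ Finset.Icc 1 ⌊c⌋₊ := by
    intro k hk
    simp only [Finset.mem_filter, Finset.mem_Icc] at *
    exact ⟨hk.1.1, Nat.le_floor hk.2⟩
  have h1 := Finset.card_le_card hsub
  have h2 : (Finset.Icc 1 ⌊c⌋₊).card = ⌊c⌋₊ := by simp
  have h3 : (⌊c⌋₊ : ℝ) ≤ c := Nat.floor_le hc
  calc ((((Finset.Icc 1 m).filter (fun k : ℕ => (k:ℝ) ≤ c)).card : ℝ))
      ≤ ((Finset.Icc 1 ⌊c⌋₊).card : ℝ) := by exact_mod_cast h1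
    _ = (⌊c⌋₊ : ℝ) := by rw [h2]
    _ ≤ c := h3

lemma countB (m : ℕ) (c : ℝ) (hc : 0 ≤ c) :
    (((Finset.Icc 1 m).filter (fun k : ℕ => (m:ℝ) - (k:ℝ) < c)).card : ℝ) ≤ c + 1 := by
  have hsub : (Finset.Icc 1 m).filter (fun k : ℕ => (m:ℝ) - (k:ℝ) < c)
      ⊆ Finset.Icc (m - ⌊c⌋₊) m := by
    intro k hk
    simp only [Finset.mem_filter, Finset.mem_Icc] at *
    refine ⟨?_, hk.1.2⟩
    have hkm : k ≤ m := hk.1.2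
    have hcast : ((m - k : ℕ) : ℝ) ≤ c := by
      rw [Nat.cast_sub hkm]; linarith [hk.2]
    have := Nat.le_floor hcast
    omega
  have h1 := Finset.card_le_card hsub
  have h2 : (Finset.Icc (m - ⌊c⌋₊) m).card ≤ ⌊c⌋₊ + 1 := by
    rw [Nat.card_Icc]; omega
  have h3 : (⌊c⌋₊ : ℝ) ≤ c := Nat.floor_le hc
  have h4 := h1.trans h2
  calc (((Finset.Icc 1 m).filter (fun k : ℕ => (m:ℝ) - (k:ℝ) < c)).card : ℝ)
      ≤ ((⌊c⌋₊ + 1 : ℕ) : ℝ) := by exact_mod_cast h4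
    _ ≤ c + 1 := by push_cast; linarith

/-- If the fractional vertex cover polytope (with value bound `F + 1/3`) of a bipartite
graph with `n` vertices on each side is nonempty, its volume is at least `(1/(20n))^(2n)`. -/
theorem stmt0 (n : ℕ) (hn : 1 ≤ n) (F : ℕ) (E : Finset (Fin n × Fin n))
    (S : Set ((Fin n ⊕ Fin n) → ℝ))
    (hS : S = {x | (∀ v, 0 ≤ x v ∧ x v ≤ 1) ∧
      (∀ e ∈ E, 1 ≤ x (Sum.inl e.1) + x (Sum.inr e.2)) ∧
      (∑ v, x v) ≤ (F : ℝ) + 1 / 3}) :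
    S.Nonempty →
      ENNReal.ofReal ((1 / (20 * (n : ℝ))) ^ (2 * n)) ≤ MeasureTheory.volume S := by
  classical
  rintro ⟨x, hx⟩
  subst hS
  obtain ⟨hx01, hxE, hxsum⟩ := hx
  have hn' : (0:ℝ) < n := by exact_mod_cast hn
  have h1n : (1:ℝ) ≤ n := by exact_mod_cast hn
  set m : ℕ := 3 * n with hm
  have hmpos : (0:ℝ) < m := by positivity
  set P : ℕ → (Fin n ⊕ Fin n) → Prop :=
    fun k v => Sum.elim (fun u => (k:ℝ) ≤ (m:ℝ) * x (Sum.inl u))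
      (fun u => (m:ℝ) - (k:ℝ) < (m:ℝ) * x (Sum.inr u)) v with hP
  set N : ℕ → ℕ := fun k => (Finset.univ.filter (P k)).card with hN
  have hNk : ∀ k, (N k : ℝ) = ∑ v : Fin n ⊕ Fin n, (if P k v then (1:ℝ) else 0) := by
    intro k
    simp only [hN]
    rw [Finset.card_filter]
    push_cast
    rfl
  -- key claim: some threshold gives a cover of size ≤ F
  have key : ∃ k ∈ Finset.Icc 1 m, N k ≤ F := by
    by_contra hcon
    push_neg at hcon
    have hlow : ∀ k ∈ Finset.Icc 1 m, ((F:ℝ) + 1) ≤ (N k : ℝ) := by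
      intro k hk
      have := hcon k hk
      exact_mod_cast this
    have hsum1 : ((m:ℝ)) * ((F:ℝ) + 1) ≤ ∑ k ∈ Finset.Icc 1 m, (N k : ℝ) := by
      calc ((m:ℝ)) * ((F:ℝ) + 1) = ∑ _k ∈ Finset.Icc 1 m, ((F:ℝ) + 1) := by
            rw [Finset.sum_const, Nat.card_Icc, Nat.add_sub_cancel, nsmul_eq_mul]
        _ ≤ ∑ k ∈ Finset.Icc 1 m, (N k : ℝ) := Finset.sum_le_sum hlow
    have hsum2 : ∑ k ∈ Finset.Icc 1 m, (N k : ℝ) ≤ (m:ℝ) * (∑ v, x v) + n := by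
      have hswap : ∑ k ∈ Finset.Icc 1 m, (N k : ℝ)
          = ∑ v : Fin n ⊕ Fin n, ∑ k ∈ Finset.Icc 1 m, (if P k v then (1:ℝ) else 0) := by
        simp_rw [hNk]
        exact Finset.sum_comm
      rw [hswap]
      have hbound : ∀ v : Fin n ⊕ Fin n,
          ∑ k ∈ Finset.Icc 1 m, (if P k v then (1:ℝ) else 0)
          ≤ (m:ℝ) * x v + (Sum.elim (fun _ => (0:ℝ)) (fun _ => 1) v) := by
        rintro (u | u)
        · have hx0 := (hx01 (Sum.inl u)).1
          have hc : (0:ℝ) ≤ (m:ℝ) * x (Sum.inl u) := by positivity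
          have := countA m ((m:ℝ) * x (Sum.inl u)) hc
          rw [Finset.card_filter] at this
          push_cast at this
          simpa [hP] using this
        · have hx0 := (hx01 (Sum.inr u)).1
          have hc : (0:ℝ) ≤ (m:ℝ) * x (Sum.inr u) := by positivity
          have := countB m ((m:ℝ) * x (Sum.inr u)) hc
          rw [Finset.card_filter] at this
          push_cast at this
          simpa [hP] using this
      calc ∑ v : Fin n ⊕ Fin n, ∑ k ∈ Finset.Icc 1 m, (if P k v then (1:ℝ) else 0)
          ≤ ∑ v : Fin n ⊕ Fin n, ((m:ℝ) * x v + (Sum.elim (fun _ => (0:ℝ)) (fun _ => 1) v)) :=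
            Finset.sum_le_sum (fun v _ => hbound v)
        _ = (m:ℝ) * (∑ v, x v) + n := by
            rw [Finset.sum_add_distrib, ← Finset.mul_sum]
            congr 1
            rw [Fintype.sum_sum_type]
            simp
    have hmn : (m:ℝ) = 3 * n := by rw [hm]; push_cast; ring
    have hfin : (m:ℝ) * ((F:ℝ) + 1) ≤ (m:ℝ) * ((F:ℝ) + 1/3) + n := by
      refine hsum1.trans (hsum2.trans ?_)
      have : (m:ℝ) * (∑ v, x v) ≤ (m:ℝ) * ((F:ℝ) + 1/3) :=
        mul_le_mul_of_nonneg_left hxsum hmpos.le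
      linarith
    rw [hmn] at hfin
    nlinarith
  obtain ⟨k, hkmem, hNkF⟩ := key
  -- define the box
  set ε : ℝ := 1 / (20 * n) with hε
  have hε0 : 0 < ε := by positivity
  have hε20 : ε ≤ 1/20 := by
    rw [hε, div_le_div_iff₀ (by positivity) (by norm_num)]
    nlinarith
  set I : (Fin n ⊕ Fin n) → Set ℝ :=
    fun v => if P k v then Set.Icc (1 - ε) 1 else Set.Icc ε (2*ε) with hI
  have hsub : Set.univ.pi I ⊆ {x | (∀ v, 0 ≤ x v ∧ x v ≤ 1) ∧
      (∀ e ∈ E, 1 ≤ x (Sum.inl e.1) + x (Sum.inr e.2)) ∧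
      (∑ v, x v) ≤ (F : ℝ) + 1 / 3} := by
    intro y hy
    have hyv : ∀ v, y v ∈ I v := fun v => hy v (Set.mem_univ v)
    have hlow : ∀ v, ε ≤ y v := by
      intro v
      have hv := hyv v
      simp only [hI] at hv
      by_cases h : P k v <;> simp [h] at hv
      · linarith [hv.1]
      · exact hv.1
    have hhigh : ∀ v, y v ≤ 1 := by
      intro v
      have hv := hyv v
      simp only [hI] at hv
      by_cases h : P k v <;> simp [h] at hv
      · exact hv.2
      · linarith [hv.2]
    have hcover : ∀ v, P k v → 1 - ε ≤ y v := by
      intro v h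
      have hv := hyv v
      simp only [hI] at hv
      rw [if_pos h] at hv
      exact hv.1
    refine ⟨fun v => ⟨le_trans hε0.le (hlow v), hhigh v⟩, ?_, ?_⟩
    · intro e he
      have hxe := hxE e he
      by_cases h : P k (Sum.inl e.1)
      · have h1 := hcover _ h
        have h2 := hlow (Sum.inr e.2)
        linarith
      · have hfl : ¬ ((k:ℝ) ≤ (m:ℝ) * x (Sum.inl e.1)) := by
          simpa [hP] using h
        push_neg at hfl
        have hPr : P k (Sum.inr e.2) := by
          simp only [hP, Sum.elim_inr]
          nlinarith
        have h1 := hcover _ hPr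
        have h2 := hlow (Sum.inl e.1)
        linarith
    · have hterm : ∀ v, y v ≤ (if P k v then (1:ℝ) else 0) + 2*ε := by
        intro v
        by_cases h : P k v
        · simp only [if_pos h]; linarith [hhigh v]
        · have hv := hyv v
          simp only [hI] at hv
          rw [if_neg h] at hv
          simp only [if_neg h]
          linarith [hv.2]
      have hcard : (Finset.univ : Finset (Fin n ⊕ Fin n)).card = n + n := by
        simp [Fintype.card_sum]
      have h2 : ((n:ℝ) + n) * (2*ε) = 1/5 := by
        rw [hε]; field_simp; ring
      calc ∑ v, y v ≤ ∑ v : Fin n ⊕ Fin n, ((if P k v then (1:ℝ) else 0) + 2*ε) :=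
            Finset.sum_le_sum (fun v _ => hterm v)
        _ = (N k : ℝ) + ((n:ℝ) + n) * (2*ε) := by
            rw [Finset.sum_add_distrib, Finset.sum_const, hcard, nsmul_eq_mul, ← hNk k]
            push_cast
            ring
        _ ≤ (F:ℝ) + 1/3 := by
            have h1 : (N k : ℝ) ≤ F := by exact_mod_cast hNkF
            rw [h2]
            linarith
  have hvol : MeasureTheory.volume (Set.univ.pi I)
      = ENNReal.ofReal ε ^ (2 * n) := by
    rw [MeasureTheory.volume_pi_pi]
    have hv : ∀ v : Fin n ⊕ Fin n, MeasureTheory.volume (I v) = ENNReal.ofReal ε := by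
      intro v
      simp only [hI]
      by_cases h : P k v
      · rw [if_pos h, Real.volume_Icc]; congr 1; ring
      · rw [if_neg h, Real.volume_Icc]; congr 1; ring
    simp_rw [hv]
    rw [Finset.prod_const, Finset.card_univ, Fintype.card_sum, Fintype.card_fin]
    congr 1
    omega
  calc ENNReal.ofReal ((1 / (20 * (n : ℝ))) ^ (2 * n))
      = ENNReal.ofReal ε ^ (2 * n) := by
        rw [ENNReal.ofReal_pow (by positivity : (0:ℝ) ≤ 1 / (20 * (n:ℝ)))]
    _ = MeasureTheory.volume (Set.univ.pi I) := hvol.symm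
    _ ≤ _ := measure_mono hsub
end

section
/- (Berge's lemma, bipartite case used in the reduction.) Let G be a bipartite graph and M a matching of G that is not of maximum cardinality. Then G contains an M-augmenting path, i.e., a path with an odd number of edges 2ℓ+1 whose endpoints are both unmatched by M and whose edges alternate between E \ M and M (ℓ edges of M and ℓ+1 edges not in M). -/
/-- An alternating chain for Berge's lemma: `a 0 = s` is unmatched by `M`,
the edges `(a i, b i)` for `i ≤ k` belong to `M' \ M`, and `(a (i+1), b i) ∈ M`
for `i < k`. -/
def BergeChain {α β : Type} (M M' : Finset (α × β)) (s : α) (k : ℕ)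
    (a : ℕ → α) (b : ℕ → β) : Prop :=
  a 0 = s ∧ (∀ e ∈ M, e.1 ≠ s) ∧
  (∀ i ≤ k, (a i, b i) ∈ M' ∧ (a i, b i) ∉ M) ∧
  (∀ i < k, (a (i + 1), b i) ∈ M)

/-- Backward determinism of alternating walks. -/
lemma berge_back {α β : Type} (M M' : Finset (α × β))
    (hMm : ∀ e ∈ M, ∀ f ∈ M, e ≠ f → e.1 ≠ f.1 ∧ e.2 ≠ f.2)
    (hM'm : ∀ e ∈ M', ∀ f ∈ M', e ≠ f → e.1 ≠ f.1 ∧ e.2 ≠ f.2)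
    (a a' : ℕ → α) (b b' : ℕ → β) (K K' : ℕ)
    (h1 : ∀ i < K, (a i, b i) ∈ M') (h1' : ∀ i < K', (a' i, b' i) ∈ M')
    (h2 : ∀ i < K, (a (i + 1), b i) ∈ M) (h2' : ∀ i < K', (a' (i + 1), b' i) ∈ M) :
    ∀ j j', j ≤ j' → j ≤ K → j' ≤ K' → a j = a' j' → a 0 = a' (j' - j) := by
  intro j
  induction j with
  | zero => intro j' _ _ _ h; simpa using h
  | succ j ih =>
    intro j' hle hK hK' heq
    obtain ⟨j'', rfl⟩ : ∃ j'', j' = j'' + 1 := ⟨j' - 1, by omega⟩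
    have hM1 : (a (j + 1), b j) ∈ M := h2 j (by omega)
    have hM2 : (a' (j'' + 1), b' j'') ∈ M := h2' j'' (by omega)
    have hbb : b j = b' j'' := by
      by_cases hc : ((a (j + 1), b j) : α × β) = (a' (j'' + 1), b' j'')
      · exact congrArg Prod.snd hc
      · exact absurd heq (hMm _ hM1 _ hM2 hc).1
    have hM'1 : (a j, b j) ∈ M' := h1 j (by omega)
    have hM'2 : (a' j'', b' j'') ∈ M' := h1' j'' (by omega)
    have haa : a j = a' j'' := by
      by_cases hc : ((a j, b j) : α × β) = (a' j'', b' j'')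
      · exact congrArg Prod.fst hc
      · exact absurd hbb (hM'm _ hM'1 _ hM'2 hc).2
    have := ih j'' (by omega) (by omega) (by omega) haa
    simpa [Nat.succ_sub_succ] using this

/-- Berge's lemma (bipartite case): if a matching `M` of a bipartite graph is not of
maximum cardinality, then there is an `M`-augmenting path: distinct left vertices
`a 0, …, a ℓ` and distinct right vertices `b 0, …, b ℓ` with non-matching edges
`(a i, b i)` for `i ≤ ℓ`, matching edges `(a (i+1), b i)` for `i < ℓ`, and both
endpoints `a 0` and `b ℓ` unmatched by `M`. -/
theorem stmt14 {α β : Type} [Fintype α] [Fintype β] [DecidableEq α] [DecidableEq β]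
    (E M : Finset (α × β)) (hME : M ⊆ E)
    (hMm : ∀ e ∈ M, ∀ f ∈ M, e ≠ f → e.1 ≠ f.1 ∧ e.2 ≠ f.2)
    (hnotmax : ∃ M' ⊆ E, (∀ e ∈ M', ∀ f ∈ M', e ≠ f → e.1 ≠ f.1 ∧ e.2 ≠ f.2) ∧
      M.card < M'.card) :
    ∃ (ℓ : ℕ) (a : ℕ → α) (b : ℕ → β),
      (∀ i ≤ ℓ, ∀ j ≤ ℓ, a i = a j → i = j) ∧
      (∀ i ≤ ℓ, ∀ j ≤ ℓ, b i = b j → i = j) ∧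
      (∀ i ≤ ℓ, (a i, b i) ∈ E ∧ (a i, b i) ∉ M) ∧
      (∀ i < ℓ, (a (i + 1), b i) ∈ M) ∧
      (∀ e ∈ M, e.1 ≠ a 0) ∧ (∀ e ∈ M, e.2 ≠ b ℓ) := by
  classical
  by_contra hno
  obtain ⟨M', hM'E, hM'm, hcard⟩ := hnotmax
  -- β is nonempty since M' is nonempty
  obtain ⟨e₀, he₀⟩ := Finset.card_pos.mp (lt_of_le_of_lt (Nat.zero_le _) hcard)
  have hβ : Nonempty β := ⟨e₀.2⟩
  -- uniqueness helpers
  have uM1 : ∀ {x : α} {y y' : β}, (x, y) ∈ M → (x, y') ∈ M → y = y' := by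
    intro x y y' h h'
    by_cases hc : ((x, y) : α × β) = (x, y')
    · exact congrArg Prod.snd hc
    · exact absurd rfl (hMm _ h _ h' hc).1
  have uM'2 : ∀ {x x' : α} {y : β}, (x, y) ∈ M' → (x', y) ∈ M' → x = x' := by
    intro x x' y h h'
    by_cases hc : ((x, y) : α × β) = (x', y)
    · exact congrArg Prod.fst hc
    · exact absurd rfl (hM'm _ h _ h' hc).2
  set A : Finset α := M.image Prod.fst with hA
  set A' : Finset α := M'.image Prod.fst with hA'
  -- injectivity of `a` within a chain
  have ainj : ∀ s k a b, BergeChain M M' s k a b →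
      ∀ i ≤ k, ∀ j ≤ k, a i = a j → i = j := by
    intro s k a b hc i hi j hj hij
    obtain ⟨ha0, hun, hM', hMe⟩ := hc
    have key : ∀ i j, i ≤ j → j ≤ k → a i = a j → i = j := by
      intro i j hij hjk heq
      have h0 := berge_back M M' hMm hM'm a a b b k k
        (fun i hi => (hM' i (le_of_lt hi)).1) (fun i hi => (hM' i (le_of_lt hi)).1)
        hMe hMe i j hij (le_trans hij hjk) hjk heq
      by_contra hne
      obtain ⟨m, hm⟩ : ∃ m, j - i = m + 1 := ⟨j - i - 1, by omega⟩
      have hedge : (a (m + 1), b m) ∈ M := hMe m (by omega)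
      have : a (m + 1) = s := by rw [← hm, ← h0, ha0]
      exact hun _ hedge this
    rcases le_total i j with h | h
    · exact key i j h hj hij
    · exact (key j i h hi hij.symm).symm
  -- a chain whose last b is unmatched gives the (negated) goal
  have success : ∀ s k a b, BergeChain M M' s k a b →
      (∀ x, (x, b k) ∉ M) → False := by
    intro s k a b hc hbk
    obtain ⟨ha0, hun, hM', hMe⟩ := hc
    refine hno ⟨k, a, b, ainj s k a b ⟨ha0, hun, hM', hMe⟩, ?_, ?_, hMe, ?_, ?_⟩
    · intro i hi j hj hbij
      have := uM'2 (hM' i hi).1 (by rw [hbij]; exact (hM' j hj).1)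
      exact ainj s k a b ⟨ha0, hun, hM', hMe⟩ i hi j hj this
    · intro i hi
      exact ⟨hM'E (hM' i hi).1, (hM' i hi).2⟩
    · intro e he
      rw [ha0]; exact hun e he
    · intro e he hc2
      exact hbk e.1 (by rwa [← hc2, Prod.mk.eta])
  -- growing the walk
  have grow : ∀ n s, s ∈ A' → s ∉ A →
      (∃ k a b, BergeChain M M' s k a b ∧ (a (k + 1), b k) ∈ M ∧
        ∀ y, (a (k + 1), y) ∉ M') ∨
      (∃ a b, BergeChain M M' s n a b) := by
    intro n
    induction n with
    | zero =>
      intro s hs1 hs2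
      right
      obtain ⟨e, he, hes⟩ := Finset.mem_image.mp hs1
      have hun : ∀ f ∈ M, f.1 ≠ s := by
        intro f hf hfs
        exact hs2 (Finset.mem_image.mpr ⟨f, hf, hfs⟩)
      refine ⟨fun _ => s, fun _ => e.2, rfl, hun, ?_, by omega⟩
      intro i _
      constructor
      · rw [show ((s, e.2) : α × β) = e by rw [← hes, Prod.mk.eta]]; exact he
      · intro hmem; exact hun _ hmem rfl
    | succ n ih =>
      intro s hs1 hs2
      rcases ih s hs1 hs2 with h | ⟨a, b, hc⟩
      · exact Or.inl h
      obtain ⟨ha0, hun, hM', hMe⟩ := hc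
      by_cases hbm : ∃ x, (x, b n) ∈ M
      · obtain ⟨x, hx⟩ := hbm
        by_cases hxm : ∃ y, (x, y) ∈ M'
        · obtain ⟨y, hy⟩ := hxm
          right
          set a₂ := Function.update a (n + 1) x with ha₂
          set b₂ := Function.update b (n + 1) y with hb₂
          have ha₂e : ∀ i ≤ n, a₂ i = a i := by
            intro i hi; exact Function.update_of_ne (by omega) _ _
          have hb₂e : ∀ i ≤ n, b₂ i = b i := by
            intro i hi; exact Function.update_of_ne (by omega) _ _
          have ha₂t : a₂ (n + 1) = x := Function.update_self _ _ _
          have hb₂t : b₂ (n + 1) = y := Function.update_self _ _ _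
          -- (x, y) ∉ M
          have hxyM : (x, y) ∉ M := by
            intro hmem
            have hyb : y = b n := uM1 hmem hx
            have hxa : x = a n := by
              apply uM'2 (y := b n) _ (hM' n le_rfl).1
              rwa [← hyb]
            rw [hxa] at hx
            exact (hM' n le_rfl).2 hx
          refine ⟨a₂, b₂, ?_, ?_, ?_, ?_⟩
          · rw [ha₂e 0 (by omega)]; exact ha0
          · exact hun
          · intro i hi
            rcases Nat.lt_or_ge i (n + 1) with h | h
            · rw [ha₂e i (by omega), hb₂e i (by omega)]
              exact hM' i (by omega)
            · have : i = n + 1 := by omega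
              rw [this, ha₂t, hb₂t]
              exact ⟨hy, hxyM⟩
          · intro i hi
            rcases Nat.lt_or_ge i n with h | h
            · rw [show a₂ (i + 1) = a (i + 1) from ha₂e _ (by omega),
                hb₂e i (by omega)]
              exact hMe i h
            · have : i = n := by omega
              rw [this, ha₂t, hb₂e n le_rfl]
              exact hx
        · left
          set a₂ := Function.update a (n + 1) x with ha₂
          have ha₂e : ∀ i ≤ n, a₂ i = a i := by
            intro i hi; exact Function.update_of_ne (by omega) _ _
          have ha₂t : a₂ (n + 1) = x := Function.update_self _ _ _
          refine ⟨n, a₂, b, ⟨?_, hun, ?_, ?_⟩, ?_, ?_⟩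
          · rw [ha₂e 0 (by omega)]; exact ha0
          · intro i hi; rw [ha₂e i hi]; exact hM' i hi
          · intro i hi; rw [ha₂e (i + 1) (by omega)]; exact hMe i hi
          · rw [ha₂t]; exact hx
          · rw [ha₂t]; push_neg at hxm; exact hxm
      · push_neg at hbm
        exact absurd (success s n a b ⟨ha0, hun, hM', hMe⟩ hbm) id
  -- no chain of length `Fintype.card α` exists
  have nolong : ∀ s a b, ¬ BergeChain M M' s (Fintype.card α) a b := by
    intro s a b hc
    have hinj : Function.Injective (fun i : Fin (Fintype.card α + 1) => a i) := by
      intro i j hij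
      exact Fin.ext (ainj s _ a b hc i (by omega) j (by omega) hij)
    have := Fintype.card_le_of_injective _ hinj
    simp at this
  -- every vertex of A' \ A leads to a failing walk
  have hfail : ∀ s : α, ∃ (k : ℕ) (a : ℕ → α) (b : ℕ → β),
      s ∈ A' → s ∉ A → BergeChain M M' s k a b ∧ (a (k + 1), b k) ∈ M ∧
        ∀ y, (a (k + 1), y) ∉ M' := by
    intro s
    by_cases hs : s ∈ A' ∧ s ∉ A
    · rcases grow (Fintype.card α) s hs.1 hs.2 with ⟨k, a, b, h⟩ | ⟨a, b, hc⟩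
      · exact ⟨k, a, b, fun _ _ => h⟩
      · exact absurd hc (nolong s a b)
    · refine ⟨0, fun _ => s, fun _ => Classical.arbitrary β, fun h1 h2 => ?_⟩
      exact absurd ⟨h1, h2⟩ hs
  choose k a b hspec using hfail
  set f : α → α := fun s => a s (k s + 1) with hf
  -- f maps A' \ A into A \ A'
  have hmaps : ∀ s ∈ A' \ A, f s ∈ A \ A' := by
    intro s hs
    obtain ⟨hs1, hs2⟩ := Finset.mem_sdiff.mp hs
    obtain ⟨hc, hedge, hum⟩ := hspec s hs1 hs2
    refine Finset.mem_sdiff.mpr ⟨Finset.mem_image.mpr ⟨_, hedge, rfl⟩, ?_⟩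
    intro hmem
    obtain ⟨e, he, hes⟩ := Finset.mem_image.mp hmem
    apply hum e.2
    rw [show a s (k s + 1) = e.1 from hes.symm, Prod.mk.eta]
    exact he
  -- f is injective on A' \ A
  have hinjf : Set.InjOn f (A' \ A : Finset α) := by
    have key : ∀ s s', s ∈ A' \ A → s' ∈ A' \ A → k s ≤ k s' → f s = f s' → s = s' := by
      intro s s' hs hs' hk hfe
      obtain ⟨hs1, hs2⟩ := Finset.mem_sdiff.mp hs
      obtain ⟨hs1', hs2'⟩ := Finset.mem_sdiff.mp hs'
      obtain ⟨⟨ha0, hun, hM'c, hMc⟩, hedge, _⟩ := hspec s hs1 hs2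
      obtain ⟨⟨ha0', hun', hM'c', hMc'⟩, hedge', _⟩ := hspec s' hs1' hs2'
      have h1 : ∀ i < k s + 1, (a s i, b s i) ∈ M' :=
        fun i hi => (hM'c i (by omega)).1
      have h1' : ∀ i < k s' + 1, (a s' i, b s' i) ∈ M' :=
        fun i hi => (hM'c' i (by omega)).1
      have h2 : ∀ i < k s + 1, (a s (i + 1), b s i) ∈ M := by
        intro i hi
        rcases Nat.lt_or_ge i (k s) with h | h
        · exact hMc i h
        · have : i = k s := by omega
          rw [this]; exact hedge
      have h2' : ∀ i < k s' + 1, (a s' (i + 1), b s' i) ∈ M := by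
        intro i hi
        rcases Nat.lt_or_ge i (k s') with h | h
        · exact hMc' i h
        · have : i = k s' := by omega
          rw [this]; exact hedge'
      have h0 := berge_back M M' hMm hM'm (a s) (a s') (b s) (b s')
        (k s + 1) (k s' + 1) h1 h1' h2 h2' (k s + 1) (k s' + 1)
        (by omega) le_rfl le_rfl hfe
      by_cases hkk : k s = k s'
      · rw [hkk] at h0
        simp at h0
        rw [← ha0, h0, ha0']
      · exfalso
        obtain ⟨m, hm⟩ : ∃ m, (k s' + 1) - (k s + 1) = m + 1 := ⟨k s' - k s - 1, by omega⟩
        have hedge2 : (a s' (m + 1), b s' m) ∈ M := h2' m (by omega)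
        have : a s' (m + 1) = s := by rw [← hm, ← h0, ha0]
        exact hun _ hedge2 this
    intro s hs s' hs' hfe
    simp only [Finset.coe_sdiff, Set.mem_diff, Finset.mem_coe] at hs hs'
    have hs2 : s ∈ A' \ A := Finset.mem_sdiff.mpr hs
    have hs2' : s' ∈ A' \ A := Finset.mem_sdiff.mpr hs'
    rcases le_total (k s) (k s') with h | h
    · exact key s s' hs2 hs2' h hfe
    · exact (key s' s hs2' hs2 h hfe.symm).symm
  have hcardle : (A' \ A).card ≤ (A \ A').card :=
    Finset.card_le_card_of_injOn f hmaps hinjf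
  have cA : A.card = M.card := by
    apply Finset.card_image_of_injOn
    intro e he g hg heg
    by_contra hne
    exact (hMm e he g hg hne).1 heg
  have cA' : A'.card = M'.card := by
    apply Finset.card_image_of_injOn
    intro e he g hg heg
    by_contra hne
    exact (hM'm e he g hg hne).1 heg
  have h1 := Finset.card_sdiff_add_card_inter A' A
  have h2 := Finset.card_sdiff_add_card_inter A A'
  have hint : (A' ∩ A).card = (A ∩ A').card := by rw [Finset.inter_comm]
  omega
end

section
/- (Amortized simulation of OR-queries by bounded-width OR-queries.) Fix a ground set U with |U| = N and a hidden subset E ⊆ U. Suppose an adaptive algorithm issues q OR-queries (each asking, for some S ⊆ U, whether S ∩ E ≠ ∅). Then these can be simulated adaptively by OR_k-queries (OR-queries restricted to sets of size at most k) using at most q + ⌊N/k⌋ queries in total. Concretely: maintain a set E^c ⊆ U of elements known not to lie in E; to simulate an OR-query S, partition S \ E^c into blocks S₁,…,S_r with |S_i| = k for i < r and |S_r| ≤ k, query the blocks in order until a 'YES' is received or all blocks are exhausted, and add each fully-'NO' block of size exactly k to E^c. The total number of queries charged to growing E^c is at most ⌊N/k⌋, and at most one query per original OR-query is charged otherwise.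 -/
/-- An adaptive OR-query algorithm over a ground set `U` with answers in `A`:
either answer, or ask whether a set `S ⊆ U` intersects the hidden set `E`
and branch on the boolean reply. -/
inductive OrTree (U : Type) (A : Type) : Type
  | ans : A → OrTree U A
  | ask : Finset U → (Bool → OrTree U A) → OrTree U A

variable {U A : Type} [DecidableEq U]

/-- The answer produced by the algorithm on hidden set `E`. -/
def OrTree.run (E : Finset U) : OrTree U A → A
  | .ans a => a
  | .ask S f => OrTree.run E (f (decide (S ∩ E).Nonempty))

/-- The number of queries issued on hidden set `E`. -/
def OrTree.cost (E : Finset U) : OrTree U A → ℕ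
  | .ans _ => 0
  | .ask S f => 1 + OrTree.cost E (f (decide (S ∩ E).Nonempty))

/-- Every query asked (on any branch) has size at most `k`. -/
def OrTree.widthLE (k : ℕ) : OrTree U A → Prop
  | .ans _ => True
  | .ask S f => S.card ≤ k ∧ ∀ b, OrTree.widthLE k (f b)

set_option linter.unusedSectionVars false

noncomputable def pick (k : ℕ) (S : Finset U) (h : k ≤ S.card) : Finset U :=
  (Finset.exists_subset_card_eq h).choose

lemma pick_subset (k : ℕ) (S : Finset U) (h : k ≤ S.card) : pick k S h ⊆ S :=
  (Finset.exists_subset_card_eq h).choose_spec.1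

lemma pick_card (k : ℕ) (S : Finset U) (h : k ≤ S.card) : (pick k S h).card = k :=
  (Finset.exists_subset_card_eq h).choose_spec.2

noncomputable def simQ (k : ℕ) (g : Bool → Finset U → OrTree U A) :
    ℕ → Finset U → Finset U → OrTree U A
  | 0, S, C => .ask S (fun b => if b then g true C else g false (C ∪ S))
  | n+1, S, C =>
    if h : S.card ≤ k then
      .ask S (fun b => if b then g true C else g false (C ∪ S))
    else
      .ask (pick k S (le_of_not_ge h))
        (fun b => if b then g true C
          else simQ k g n (S \ pick k S (le_of_not_ge h)) (C ∪ pick k S (le_of_not_ge h)))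

noncomputable def sim (k : ℕ) : OrTree U A → Finset U → OrTree U A
  | .ans a, _ => .ans a
  | .ask S f, C => simQ k (fun b C' => sim k (f b) C') (S \ C).card (S \ C) C

lemma sdiff_inter_eq {S C E : Finset U} (h : Disjoint C E) : (S \ C) ∩ E = S ∩ E := by
  ext x
  simp only [Finset.mem_inter, Finset.mem_sdiff]
  constructor
  · rintro ⟨⟨h1, _⟩, h2⟩; exact ⟨h1, h2⟩
  · rintro ⟨h1, h2⟩; exact ⟨⟨h1, fun hc => Finset.disjoint_left.mp h hc h2⟩, h2⟩

lemma run_simQ {E : Finset U} (k : ℕ) (g : Bool → Finset U → OrTree U A) (h : Bool → A)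
    (hg : ∀ b C', Disjoint C' E → OrTree.run E (g b C') = h b) :
    ∀ n S C, Disjoint C E →
      OrTree.run E (simQ k g n S C) = h (decide (S ∩ E).Nonempty) := by
  intro n
  induction n with
  | zero =>
    intro S C hC
    by_cases hSE : (S ∩ E).Nonempty
    · simp [simQ, OrTree.run, hSE, hg _ _ hC]
    · have hSd : Disjoint S E := Finset.disjoint_iff_inter_eq_empty.mpr
        (Finset.not_nonempty_iff_eq_empty.mp hSE)
      simp [simQ, OrTree.run, hSE, hg _ _ (Finset.disjoint_union_left.mpr ⟨hC, hSd⟩)]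
  | succ n ih =>
    intro S C hC
    by_cases hsmall : S.card ≤ k
    · by_cases hSE : (S ∩ E).Nonempty
      · simp [simQ, hsmall, OrTree.run, hSE, hg _ _ hC]
      · have hSd : Disjoint S E := Finset.disjoint_iff_inter_eq_empty.mpr
          (Finset.not_nonempty_iff_eq_empty.mp hSE)
        simp [simQ, hsmall, OrTree.run, hSE,
          hg _ _ (Finset.disjoint_union_left.mpr ⟨hC, hSd⟩)]
    · set t := pick k S (le_of_not_ge hsmall) with ht
      by_cases htE : (t ∩ E).Nonempty
      · have hSE : (S ∩ E).Nonempty := by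
          obtain ⟨x, hx⟩ := htE
          rw [Finset.mem_inter] at hx
          exact ⟨x, Finset.mem_inter.mpr ⟨pick_subset _ _ _ hx.1, hx.2⟩⟩
        simp [simQ, hsmall, OrTree.run, htE, hSE, hg _ _ hC, ← ht]
      · have htd : Disjoint t E := Finset.disjoint_iff_inter_eq_empty.mpr
          (Finset.not_nonempty_iff_eq_empty.mp htE)
        have hC' : Disjoint (C ∪ t) E := Finset.disjoint_union_left.mpr ⟨hC, htd⟩
        have := ih (S \ t) (C ∪ t) hC'
        rw [sdiff_inter_eq htd] at this
        simp only [simQ, hsmall, OrTree.run, dif_neg, ← ht]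
        simpa [OrTree.run, htE] using this

lemma width_simQ (k : ℕ) (hk : 1 ≤ k) (g : Bool → Finset U → OrTree U A)
    (hg : ∀ b C', OrTree.widthLE k (g b C')) :
    ∀ n S C, S.card ≤ n → OrTree.widthLE k (simQ k g n S C) := by
  intro n
  induction n with
  | zero =>
    intro S C hn
    refine ⟨hn.trans (Nat.zero_le k), fun b => ?_⟩
    cases b <;> simp [hg]
  | succ n ih =>
    intro S C hn
    by_cases hsmall : S.card ≤ k
    · simp only [simQ, dif_pos hsmall]
      refine ⟨hsmall, fun b => ?_⟩
      cases b <;> simp [hg]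
    · simp only [simQ, dif_neg hsmall]
      refine ⟨(pick_card k S (le_of_not_ge hsmall)).le, fun b => ?_⟩
      cases b
      · simp only [if_neg Bool.false_ne_true]
        refine ih _ _ ?_
        have h1 : (S \ pick k S (le_of_not_ge hsmall)).card = S.card - k := by
          rw [Finset.card_sdiff_of_subset (pick_subset _ _ _), pick_card]
        omega
      · simp [hg]

lemma cost_simQ {E : Finset U} (k : ℕ) (g : Bool → Finset U → OrTree U A) (M : Bool → ℕ)
    (hg : ∀ b C', Disjoint C' E →
      ∃ C'' : Finset U, k * OrTree.cost E (g b C') + C'.card ≤ M b + C''.card) :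
    ∀ n S C, Disjoint C E → Disjoint S C →
      ∃ C'' : Finset U, k * OrTree.cost E (simQ k g n S C) + C.card
        ≤ k + M (decide (S ∩ E).Nonempty) + C''.card := by
  intro n
  induction n with
  | zero =>
    intro S C hC hSC
    by_cases hSE : (S ∩ E).Nonempty
    · obtain ⟨C'', hC''⟩ := hg true C hC
      refine ⟨C'', ?_⟩
      simp only [simQ, OrTree.cost, decide_eq_true hSE, if_pos, Nat.mul_add, mul_one]
      omega
    · have hSd : Disjoint S E := Finset.disjoint_iff_inter_eq_empty.mpr
        (Finset.not_nonempty_iff_eq_empty.mp hSE)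
      obtain ⟨C'', hC''⟩ := hg false (C ∪ S)
        (Finset.disjoint_union_left.mpr ⟨hC, hSd⟩)
      refine ⟨C'', ?_⟩
      have hcc : C.card ≤ (C ∪ S).card := Finset.card_le_card Finset.subset_union_left
      simp only [simQ, OrTree.cost, decide_eq_false hSE, Bool.false_eq_true, if_false,
        Nat.mul_add, mul_one]
      omega
  | succ n ih =>
    intro S C hC hSC
    by_cases hsmall : S.card ≤ k
    · by_cases hSE : (S ∩ E).Nonempty
      · obtain ⟨C'', hC''⟩ := hg true C hC
        refine ⟨C'', ?_⟩
        simp only [simQ, dif_pos hsmall, OrTree.cost, decide_eq_true hSE, if_pos,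
          Nat.mul_add, mul_one]
        omega
      · have hSd : Disjoint S E := Finset.disjoint_iff_inter_eq_empty.mpr
          (Finset.not_nonempty_iff_eq_empty.mp hSE)
        obtain ⟨C'', hC''⟩ := hg false (C ∪ S)
          (Finset.disjoint_union_left.mpr ⟨hC, hSd⟩)
        refine ⟨C'', ?_⟩
        have hcc : C.card ≤ (C ∪ S).card := Finset.card_le_card Finset.subset_union_left
        simp only [simQ, dif_pos hsmall, OrTree.cost, decide_eq_false hSE,
          Bool.false_eq_true, if_false, Nat.mul_add, mul_one]
        omega
    · set t := pick k S (le_of_not_ge hsmall) with ht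
      have htS : t ⊆ S := pick_subset _ _ _
      have htk : t.card = k := pick_card _ _ _
      by_cases htE : (t ∩ E).Nonempty
      · have hSE : (S ∩ E).Nonempty := by
          obtain ⟨x, hx⟩ := htE
          rw [Finset.mem_inter] at hx
          exact ⟨x, Finset.mem_inter.mpr ⟨htS hx.1, hx.2⟩⟩
        obtain ⟨C'', hC''⟩ := hg true C hC
        refine ⟨C'', ?_⟩
        simp only [simQ, dif_neg hsmall, OrTree.cost, ← ht, decide_eq_true htE, if_pos,
          decide_eq_true hSE, Nat.mul_add, mul_one]
        omega
      · have htd : Disjoint t E := Finset.disjoint_iff_inter_eq_empty.mpr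
          (Finset.not_nonempty_iff_eq_empty.mp htE)
        have hC' : Disjoint (C ∪ t) E := Finset.disjoint_union_left.mpr ⟨hC, htd⟩
        have hSC' : Disjoint (S \ t) (C ∪ t) := by
          refine Finset.disjoint_union_right.mpr ⟨?_, Finset.sdiff_disjoint⟩
          exact Finset.disjoint_of_subset_left (Finset.sdiff_subset) hSC
        obtain ⟨C'', hC''⟩ := ih (S \ t) (C ∪ t) hC' hSC'
        rw [sdiff_inter_eq htd] at hC''
        refine ⟨C'', ?_⟩
        have hcard : (C ∪ t).card = C.card + k := by
          rw [Finset.card_union_of_disjoint, htk]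
          exact (Finset.disjoint_of_subset_left htS hSC).symm
        simp only [simQ, dif_neg hsmall, OrTree.cost, ← ht, decide_eq_false htE,
          Bool.false_eq_true, if_false, Nat.mul_add, mul_one]
        omega

lemma run_sim {E : Finset U} (k : ℕ) :
    ∀ T : OrTree U A, ∀ C, Disjoint C E → OrTree.run E (sim k T C) = OrTree.run E T := by
  intro T
  induction T with
  | ans a => intro C hC; rfl
  | ask S f ihf =>
    intro C hC
    have := run_simQ k (fun b C' => sim k (f b) C') (fun b => OrTree.run E (f b))
      (fun b C' hC' => ihf b C' hC') (S \ C).card (S \ C) C hC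
    rw [sdiff_inter_eq hC] at this
    exact this

lemma width_sim (k : ℕ) (hk : 1 ≤ k) :
    ∀ T : OrTree U A, ∀ C, OrTree.widthLE k (sim k T C) := by
  intro T
  induction T with
  | ans a => intro C; trivial
  | ask S f ihf =>
    intro C
    exact width_simQ k hk _ (fun b C' => ihf b C') _ _ _ le_rfl

lemma cost_sim {E : Finset U} (k : ℕ) :
    ∀ T : OrTree U A, ∀ C, Disjoint C E →
      ∃ C' : Finset U, k * OrTree.cost E (sim k T C) + C.card
        ≤ k * OrTree.cost E T + C'.card := by
  intro T
  induction T with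
  | ans a => intro C hC; exact ⟨C, le_rfl⟩
  | ask S f ihf =>
    intro C hC
    obtain ⟨C'', hC''⟩ := cost_simQ k (fun b C' => sim k (f b) C')
      (fun b => k * OrTree.cost E (f b)) (fun b C' hC' => ihf b C' hC')
      (S \ C).card (S \ C) C hC Finset.sdiff_disjoint
    rw [sdiff_inter_eq hC] at hC''
    refine ⟨C'', ?_⟩
    calc k * OrTree.cost E (sim k (.ask S f) C) + C.card
        ≤ k + k * OrTree.cost E (f (decide (S ∩ E).Nonempty)) + C''.card := hC''
      _ = k * OrTree.cost E (.ask S f) + C''.card := by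
          simp only [OrTree.cost, Nat.mul_add, mul_one]


/-- Amortized simulation of OR-queries by width-`k` OR-queries: any algorithm making at
most `q` OR-queries (on every input) can be simulated by an algorithm that only asks
OR-queries over sets of size at most `k`, computes the same answer on every hidden set
`E ⊆ U`, and makes at most `q + ⌊N/k⌋` queries, where `N = |U|`. -/
theorem stmt17 [Fintype U] (N : ℕ) (hN : N = Fintype.card U)
    (k q : ℕ) (hk : 1 ≤ k) (T : OrTree U A)
    (hq : ∀ E : Finset U, OrTree.cost E T ≤ q) :
    ∃ T' : OrTree U A, OrTree.widthLE k T' ∧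
      ∀ E : Finset U, OrTree.run E T' = OrTree.run E T ∧
        OrTree.cost E T' ≤ q + N / k := by
  refine ⟨sim k T ∅, width_sim k hk T ∅, fun E => ?_⟩
  have hdisj : Disjoint (∅ : Finset U) E := Finset.disjoint_empty_left E
  refine ⟨run_sim k T ∅ hdisj, ?_⟩
  obtain ⟨C', hC'⟩ := cost_sim k T ∅ hdisj
  have h1 : k * OrTree.cost E (sim k T ∅) ≤ k * q + N := by
    have h2 : C'.card ≤ N := hN ▸ Finset.card_le_univ C'
    have h3 := hq E
    simp only [Finset.card_empty, Nat.add_zero] at hC'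
    calc k * OrTree.cost E (sim k T ∅) ≤ k * OrTree.cost E T + C'.card := hC'
      _ ≤ k * q + N := by
          exact Nat.add_le_add (Nat.mul_le_mul_left k h3) h2
  have hk0 : 0 < k := hk
  calc OrTree.cost E (sim k T ∅) ≤ (k * q + N) / k := by
        rw [Nat.le_div_iff_mul_le hk0, Nat.mul_comm]; exact h1
    _ = q + N / k := Nat.mul_add_div hk0 q N
end
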